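/- arXiv:1810.03515 — 3 statements merged into one kernel-verified Lean document; each statement's English description precedes it below -/
import Mathlib

section
/- Let v₁, v₁', v₂, v₂' be words over Γ. If |v₁'| ≠ |v₂'|, or (v₁'·v₂' ≠ ε and neither v₁ is a prefix of v₂ nor v₂ is a prefix of v₁), then delay(v₁, v₂) ≠ delay(v₁·v₁', v₂·v₂'). -/
/-- The longest common prefix of two words. -/
def lcp {Γ : Type*} [DecidableEq Γ] : List Γ → List Γ → List Γ
  | a :: as, b :: bs => if a = b then a :: lcp as bs else []
  | _, _ => []

/-- `delay (u, v) = (α₁, α₂)` where `u = ℓ·α₁`, `v = ℓ·α₂` and `ℓ` is the longest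
common prefix of `u` and `v`. -/
def delay {Γ : Type*} [DecidableEq Γ] (u v : List Γ) : List Γ × List Γ :=
  (u.drop (lcp u v).length, v.drop (lcp u v).length)

lemma lcp_nil_left {Γ : Type*} [DecidableEq Γ] (v : List Γ) : lcp [] v = [] := by
  cases v <;> rfl

lemma lcp_nil_right {Γ : Type*} [DecidableEq Γ] (u : List Γ) : lcp u [] = [] := by
  cases u <;> rfl

lemma lcp_cons {Γ : Type*} [DecidableEq Γ] (a b : Γ) (as bs : List Γ) :
    lcp (a :: as) (b :: bs) = if a = b then a :: lcp as bs else [] := rfl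

lemma lcp_prefix_left {Γ : Type*} [DecidableEq Γ] : ∀ u v : List Γ, lcp u v <+: u
  | a :: as, b :: bs => by
    rw [lcp_cons]
    split
    · simpa using (lcp_prefix_left as bs)
    · exact List.nil_prefix
  | [], v => by rw [lcp_nil_left]
  | a :: as, [] => by rw [lcp_nil_right]; exact List.nil_prefix

lemma lcp_prefix_right {Γ : Type*} [DecidableEq Γ] : ∀ u v : List Γ, lcp u v <+: v
  | a :: as, b :: bs => by
    rw [lcp_cons]
    split
    · rename_i hab; subst hab; simpa using (lcp_prefix_right as bs)
    · exact List.nil_prefix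
  | [], v => by rw [lcp_nil_left]; exact List.nil_prefix
  | a :: as, [] => by rw [lcp_nil_right]

lemma lcp_append {Γ : Type*} [DecidableEq Γ] :
    ∀ u v a b : List Γ, (lcp u v).length < u.length → (lcp u v).length < v.length →
      lcp (u ++ a) (v ++ b) = lcp u v
  | x :: xs, y :: ys, a, b, h1, h2 => by
    rw [lcp_cons] at h1 h2 ⊢
    simp only [List.cons_append]
    rw [lcp_cons]
    split
    · rename_i hxy
      simp only [if_pos hxy] at h1 h2
      simp only [List.length_cons, Nat.add_lt_add_iff_right] at h1 h2
      rw [lcp_append xs ys a b h1 h2]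
    · rfl
  | [], v, a, b, h1, h2 => by simp at h1
  | x :: xs, [], a, b, h1, h2 => by simp at h2

/-- If `|v₁'| ≠ |v₂'|`, or `v₁'·v₂' ≠ ε` and `v₁, v₂` are prefix-incomparable,
then `delay (v₁, v₂) ≠ delay (v₁ ++ v₁') (v₂ ++ v₂')`. -/
theorem sdel_ne_delay {Γ : Type*} [DecidableEq Γ] (v₁ v₁' v₂ v₂' : List Γ)
    (h : v₁'.length ≠ v₂'.length ∨
      (v₁' ++ v₂' ≠ [] ∧ ¬ v₁ <+: v₂ ∧ ¬ v₂ <+: v₁)) :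
    delay v₁ v₂ ≠ delay (v₁ ++ v₁') (v₂ ++ v₂') := by
  intro heq
  have h1 := (lcp_prefix_left v₁ v₂).length_le
  have h2 := (lcp_prefix_right v₁ v₂).length_le
  have h1' := (lcp_prefix_left (v₁ ++ v₁') (v₂ ++ v₂')).length_le
  have h2' := (lcp_prefix_right (v₁ ++ v₁') (v₂ ++ v₂')).length_le
  rcases h with h | ⟨hne, hp1, hp2⟩
  · apply h
    have e1 := congrArg (fun p => p.1.length) heq
    have e2 := congrArg (fun p => p.2.length) heq
    simp only [delay, List.length_drop, List.length_append] at e1 e2 h1' h2'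
    omega
  · have hl1 : (lcp v₁ v₂).length < v₁.length := by
      rcases lt_or_eq_of_le h1 with h' | h'
      · exact h'
      · exact absurd (((lcp_prefix_left v₁ v₂).sublist.eq_of_length h') ▸
          lcp_prefix_right v₁ v₂) hp1
    have hl2 : (lcp v₁ v₂).length < v₂.length := by
      rcases lt_or_eq_of_le h2 with h' | h'
      · exact h'
      · exact absurd (((lcp_prefix_right v₁ v₂).sublist.eq_of_length h') ▸
          lcp_prefix_left v₁ v₂) hp2
    rw [delay, delay, lcp_append v₁ v₂ v₁' v₂' hl1 hl2] at heq
    have e1 := congrArg (fun p => p.1.length) heq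
    have e2 := congrArg (fun p => p.2.length) heq
    simp only [List.length_drop, List.length_append] at e1 e2
    have : v₁'.length = 0 ∧ v₂'.length = 0 := by omega
    apply hne
    simp [List.length_eq_zero_iff.mp this.1, List.length_eq_zero_iff.mp this.2]
end

section
/- Let v₁, v₁', v₂, v₂' be words over Γ. If delay(v₁, v₂) ≠ delay(v₁·v₁', v₂·v₂'), then there exists i ≥ 0 such that SDel≠(v₁·(v₁')^i, v₁', v₂·(v₂')^i, v₂') holds, i.e., either |v₁'| ≠ |v₂'|, or (v₁'·v₂' ≠ ε and v₁·(v₁')^i and v₂·(v₂')^i are prefix-incomparable). -/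
/-- `w ^ i`: the `i`-fold concatenation of the word `w`. -/
def wpow {Γ : Type*} (w : List Γ) (i : ℕ) : List Γ :=
  (List.replicate i w).flatten

lemma lcp_comm {Γ : Type*} [DecidableEq Γ] (u v : List Γ) : lcp u v = lcp v u := by
  induction u generalizing v with
  | nil => cases v <;> simp [lcp]
  | cons a as ih =>
      cases v with
      | nil => simp [lcp]
      | cons b bs =>
          by_cases hab : a = b
          · subst hab; simp [lcp, ih]
          · simp [lcp, hab, Ne.symm hab]

lemma lcp_self_append {Γ : Type*} [DecidableEq Γ] (u t : List Γ) : lcp u (u ++ t) = u := by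
  induction u with
  | nil => cases t <;> simp [lcp]
  | cons a as ih => simp [lcp, ih]

lemma delay_self_append {Γ : Type*} [DecidableEq Γ] (u s : List Γ) :
    delay u (u ++ s) = ([], s) := by
  simp [delay, lcp_self_append]

lemma wpow_succ {Γ : Type*} (w : List Γ) (i : ℕ) : wpow w (i + 1) = w ++ wpow w i := by
  simp [wpow, List.replicate_succ]

lemma wpow_length {Γ : Type*} (w : List Γ) (i : ℕ) : (wpow w i).length = i * w.length := by
  induction i with
  | zero => simp [wpow]
  | succ n ih => rw [wpow_succ]; simp [ih]; ring

/-- Key half: if the lengths of the periods agree, the first word is no longer than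
the second, and for every `i` the first word stays a prefix of the second, then
the delay does not change. -/
lemma delay_stable {Γ : Type*} [DecidableEq Γ] (v₁ v₁' v₂ v₂' : List Γ)
    (hlen : v₁'.length = v₂'.length) (hne : v₁' ≠ [])
    (H : ∀ i, (v₁ ++ wpow v₁' i) <+: (v₂ ++ wpow v₂' i)) :
    delay v₁ v₂ = delay (v₁ ++ v₁') (v₂ ++ v₂') := by
  have h0 := H 0
  simp [wpow] at h0
  obtain ⟨s, hs⟩ := h0
  subst hs
  set n := v₁'.length with hn
  set d := s.length with hd
  have hn1 : 1 ≤ n := by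
    have : v₁'.length ≠ 0 := by simpa using hne
    omega
  have key : ∀ i, wpow v₁' i <+: s ++ wpow v₂' i := by
    intro i
    obtain ⟨u, hu⟩ := H i
    exact ⟨u, List.append_cancel_left (as := v₁) (by simpa [List.append_assoc] using hu)⟩
  have h1 : v₁' <+: s ++ v₂' := by simpa [wpow] using key 1
  obtain ⟨t, ht2⟩ := h1
  -- rewrite RHS delay
  have hrhs : delay (v₁ ++ v₁') (v₁ ++ s ++ v₂') = ([], t) := by
    have : v₁ ++ s ++ v₂' = (v₁ ++ v₁') ++ t := by
      rw [List.append_assoc, ← ht2, List.append_assoc]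
    rw [this, delay_self_append]
  rw [delay_self_append, hrhs]
  -- it remains to show s = t
  have hteq : t = (s ++ v₂').drop n := by
    rw [← ht2]; simp [hn]
  have hdt : t.length = d := by
    rw [hteq, List.length_drop, List.length_append, ← hlen]
    omega
  have k1 : wpow v₁' (d + 1) <+: s ++ wpow v₂' (d + 1) := key (d + 1)
  have k2 : wpow v₁' (d + 1) <+: t ++ wpow v₂' (d + 1) := by
    have := (key (d + 2)).drop n
    rw [show d + 2 = (d + 1) + 1 by ring, wpow_succ v₁', wpow_succ v₂'] at this
    have e1 : (v₁' ++ wpow v₁' (d + 1)).drop n = wpow v₁' (d + 1) := by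
      simp [hn]
    have e2 : (s ++ (v₂' ++ wpow v₂' (d + 1))).drop n = t ++ wpow v₂' (d + 1) := by
      rw [← List.append_assoc, List.drop_append_of_le_length, hteq]
      rw [List.length_append, ← hlen]; omega
    rwa [e1, e2] at this
  have hlenw : d ≤ (wpow v₁' (d + 1)).length := by
    rw [wpow_length, ← hn]
    calc d ≤ (d + 1) * 1 := by omega
    _ ≤ (d + 1) * n := by exact Nat.mul_le_mul_left _ hn1
  have hsw : s <+: wpow v₁' (d + 1) :=
    List.prefix_of_prefix_length_le (List.prefix_append s _) k1 hlenw
  have htw : t <+: wpow v₁' (d + 1) :=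
    List.prefix_of_prefix_length_le (List.prefix_append t _) k2 (by rw [hdt]; exact hlenw)
  have : s = t := by
    have h1 : s <+: t := List.prefix_of_prefix_length_le hsw htw (by omega)
    exact h1.eq_of_length_le (by omega)
  rw [this]

/-- If `delay (v₁, v₂) ≠ delay (v₁·v₁', v₂·v₂')` then there is `i ≥ 0` such that
`SDel≠(v₁·(v₁')^i, v₁', v₂·(v₂')^i, v₂')` holds: either `|v₁'| ≠ |v₂'|`, or
`v₁'·v₂' ≠ ε` and `v₁·(v₁')^i` and `v₂·(v₂')^i` are prefix-incomparable. -/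
theorem delay_ne_sdel {Γ : Type*} [DecidableEq Γ] (v₁ v₁' v₂ v₂' : List Γ)
    (h : delay v₁ v₂ ≠ delay (v₁ ++ v₁') (v₂ ++ v₂')) :
    ∃ i : ℕ, v₁'.length ≠ v₂'.length ∨
      (v₁' ++ v₂' ≠ [] ∧ ¬ (v₁ ++ wpow v₁' i) <+: (v₂ ++ wpow v₂' i) ∧
        ¬ (v₂ ++ wpow v₂' i) <+: (v₁ ++ wpow v₁' i)) := by
  by_contra hc
  push_neg at hc
  have hlen : v₁'.length = v₂'.length := (hc 0).1
  by_cases hnil : v₁' = []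
  · have hnil2 : v₂' = [] := by
      rw [hnil] at hlen; exact List.length_eq_zero_iff.mp hlen.symm
    rw [hnil, hnil2] at h
    simp at h
  · have hne : v₁' ++ v₂' ≠ [] := by simp [hnil]
    have hcomp : ∀ i, (v₁ ++ wpow v₁' i) <+: (v₂ ++ wpow v₂' i) ∨
        (v₂ ++ wpow v₂' i) <+: (v₁ ++ wpow v₁' i) := by
      intro i
      have hh := (hc i).2 hne
      by_cases hA : (v₁ ++ wpow v₁' i) <+: (v₂ ++ wpow v₂' i)
      · exact Or.inl hA
      · exact Or.inr (hh hA)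
    by_cases hv : v₁.length ≤ v₂.length
    · have H : ∀ i, (v₁ ++ wpow v₁' i) <+: (v₂ ++ wpow v₂' i) := by
        intro i
        rcases hcomp i with h1 | h2
        · exact h1
        · have hle : (v₁ ++ wpow v₁' i).length ≤ (v₂ ++ wpow v₂' i).length := by
            simp [wpow_length, hlen]; omega
          have := h2.eq_of_length_le hle
          rw [this]
      exact h (delay_stable v₁ v₁' v₂ v₂' hlen hnil H)
    · have hnil2 : v₂' ≠ [] := by
        intro hh; rw [hh] at hlen; exact hnil (List.length_eq_zero_iff.mp hlen)
      have H : ∀ i, (v₂ ++ wpow v₂' i) <+: (v₁ ++ wpow v₁' i) := by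
        intro i
        rcases hcomp i with h1 | h2
        · have hle : (v₂ ++ wpow v₂' i).length ≤ (v₁ ++ wpow v₁' i).length := by
            simp [wpow_length, hlen]; omega
          have := h1.eq_of_length_le hle
          rw [this]
        · exact h2
      have := delay_stable v₂ v₂' v₁ v₁' hlen.symm hnil2 H
      apply h
      have hsym : ∀ (u v : List Γ), delay u v = ((delay v u).2, (delay v u).1) := by
        intro u v; simp [delay, lcp_comm u v]
      rw [hsym v₁ v₂, hsym (v₁ ++ v₁') (v₂ ++ v₂'), this]
end

section
/- Let A be a nondeterministic finite automaton with state set Q, initial states I, final states F, and transition relation Δ ⊆ Q × Λ × Q. If there exists a state p reachable from some initial state, two distinct cycles π₁ ≠ π₂ from p to p both labeled by the same word v, and a path from p to some final state, then for every polynomial P there is a word w such that A has more than P(|w|) accepting runs on w. -/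
/-- A nondeterministic finite automaton. -/
structure NFA' (α Q : Type*) where
  start : Set Q
  accept : Set Q
  step : Q → α → Q → Prop

/-- `IsRunFrom M p w ts q`: `ts` is a sequence of transitions of `M` forming a
run from `p` to `q` labelled by the word `w`. -/
def IsRunFrom {α Q : Type*} (M : NFA' α Q) (p : Q) (w : List α)
    (ts : List (Q × α × Q)) (q : Q) : Prop :=
  ts.map (fun t => t.2.1) = w ∧
  (∀ t ∈ ts, M.step t.1 t.2.1 t.2.2) ∧
  List.Chain' (fun s t => s.2.2 = t.1) ts ∧
  (∀ t, ts.head? = some t → t.1 = p) ∧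
  (∀ t, ts.getLast? = some t → t.2.2 = q) ∧
  (ts = [] → p = q)

/-- An accepting run of `M` on `w`, given as a start state, a transition
sequence and an end state. -/
def IsAccRun {α Q : Type*} (M : NFA' α Q) (w : List α)
    (r : Q × List (Q × α × Q) × Q) : Prop :=
  r.1 ∈ M.start ∧ r.2.2 ∈ M.accept ∧ IsRunFrom M r.1 w r.2.1 r.2.2

open Polynomial in
lemma exists_nat_lt_two_pow' (c d : ℕ) : ∃ n : ℕ, 0 < n ∧ c * n ^ d < 2 ^ n := by
  have h := isLittleO_pow_const_const_pow_of_one_lt (R := ℝ) d (by norm_num : (1:ℝ) < 2)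
  have h2 := h.def (show (0:ℝ) < ((c:ℝ)+1)⁻¹ by positivity)
  rw [Filter.eventually_atTop] at h2
  obtain ⟨N, hN⟩ := h2
  refine ⟨N + 1, Nat.succ_pos _, ?_⟩
  have hb := hN (N + 1) (Nat.le_succ _)
  have h2pos : (0:ℝ) < 2 ^ (N + 1) := by positivity
  rw [Real.norm_eq_abs, Real.norm_eq_abs, abs_of_nonneg (by positivity),
    abs_of_nonneg (by positivity)] at hb
  have hlt : (c:ℝ) * ((N + 1 : ℕ):ℝ) ^ d < 2 ^ (N + 1) := by
    calc (c:ℝ) * ((N + 1 : ℕ):ℝ) ^ d ≤ (c:ℝ) * (((c:ℝ)+1)⁻¹ * 2 ^ (N + 1)) := by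
          exact mul_le_mul_of_nonneg_left hb (by positivity)
      _ = ((c:ℝ) / ((c:ℝ)+1)) * 2 ^ (N + 1) := by ring
      _ < 1 * 2 ^ (N + 1) := by
          apply mul_lt_mul_of_pos_right _ h2pos
          rw [div_lt_one (by positivity)]; linarith
      _ = 2 ^ (N + 1) := one_mul _
  have : ((c * (N+1) ^ d : ℕ) : ℝ) < ((2 ^ (N+1) : ℕ) : ℝ) := by push_cast; push_cast at hlt; linarith
  exact_mod_cast this

open Polynomial in
lemma poly_eval_lt_two_pow (P : Polynomial ℕ) : ∃ n : ℕ, P.eval n < 2 ^ n := by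
  obtain ⟨n, hn, h⟩ := exists_nat_lt_two_pow' (P.eval 1) P.natDegree
  refine ⟨n, lt_of_le_of_lt ?_ h⟩
  rw [Polynomial.eval_eq_sum_range, Polynomial.eval_eq_sum_range (x := 1)]
  calc ∑ i ∈ Finset.range (P.natDegree + 1), P.coeff i * n ^ i
      ≤ ∑ i ∈ Finset.range (P.natDegree + 1), P.coeff i * n ^ P.natDegree := by
        apply Finset.sum_le_sum
        intro i hi
        exact Nat.mul_le_mul_left _ (Nat.pow_le_pow_right hn (Nat.lt_succ_iff.mp (Finset.mem_range.mp hi)))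
    _ = (∑ i ∈ Finset.range (P.natDegree + 1), P.coeff i * 1 ^ i) * n ^ P.natDegree := by
        rw [Finset.sum_mul]; simp


lemma IsRunFrom.nil {α Q : Type*} (M : NFA' α Q) (p : Q) : IsRunFrom M p [] [] p :=
  ⟨rfl, by simp, List.isChain_nil, by simp, by simp, fun _ => rfl⟩

lemma IsRunFrom.append {α Q : Type*} {M : NFA' α Q} {p q r : Q} {w w' : List α}
    {ts ts' : List (Q × α × Q)} (h : IsRunFrom M p w ts q) (h' : IsRunFrom M q w' ts' r) :
    IsRunFrom M p (w ++ w') (ts ++ ts') r := by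
  obtain ⟨hm, hs, hc, hh, hl, he⟩ := h
  obtain ⟨hm', hs', hc', hh', hl', he'⟩ := h'
  refine ⟨by simp [hm, hm'], ?_, ?_, ?_, ?_, ?_⟩
  · intro t ht
    rcases List.mem_append.1 ht with h | h
    exacts [hs t h, hs' t h]
  · refine hc.append hc' ?_
    intro x hx y hy
    rw [hl x (Option.mem_def.mp hx)]
    exact (hh' y (Option.mem_def.mp hy)).symm
  · intro t ht
    cases ts with
    | nil =>
      rw [List.nil_append] at ht
      rw [he rfl]
      exact hh' t ht
    | cons a l =>
      rw [List.cons_append, List.head?_cons] at ht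
      cases ht
      exact hh _ rfl
  · intro t ht
    cases ts' with
    | nil =>
      rw [List.append_nil] at ht
      rw [← he' rfl]
      exact hl t ht
    | cons a l =>
      rw [List.getLast?_append, List.getLast?_eq_getLast (l := a :: l) (by simp)] at ht
      rw [Option.or_of_isSome (by simp)] at ht
      exact hl' t (by rw [List.getLast?_eq_getLast (l := a :: l) (by simp)]; exact ht)
  · intro h0
    obtain ⟨e1, e2⟩ := List.append_eq_nil_iff.mp h0
    exact (he e1).trans (he' e2)

lemma run_blocks {α Q : Type*} {M : NFA' α Q} {p : Q} {v : List α}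
    {π₁ π₂ : List (Q × α × Q)} (h₁ : IsRunFrom M p v π₁ p) (h₂ : IsRunFrom M p v π₂ p) :
    ∀ l : List Bool, IsRunFrom M p (l.map fun _ => v).flatten (l.map fun b => cond b π₁ π₂).flatten p := by
  intro l
  induction l with
  | nil => exact IsRunFrom.nil M p
  | cons b l ih =>
    have hb : IsRunFrom M p v (cond b π₁ π₂) p := by cases b <;> [exact h₂; exact h₁]
    simpa using hb.append ih

lemma blocks_inj {α Q : Type*} {π₁ π₂ : List (Q × α × Q)}
    (hlen : π₁.length = π₂.length) (hne : π₁ ≠ π₂) :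
    ∀ l₁ l₂ : List Bool, l₁.length = l₂.length →
      (l₁.map fun b => cond b π₁ π₂).flatten = (l₂.map fun b => cond b π₁ π₂).flatten → l₁ = l₂ := by
  intro l₁
  induction l₁ with
  | nil => intro l₂ h _; cases l₂ <;> simp_all
  | cons b l ih =>
    intro l₂ h hj
    cases l₂ with
    | nil => simp at h
    | cons b' l₂ =>
      simp only [List.map_cons, List.flatten_cons] at hj
      have hlen' : (cond b π₁ π₂).length = (cond b' π₁ π₂).length := by
        cases b <;> cases b' <;> simp [hlen]
      obtain ⟨hpre, hsuf⟩ := List.append_inj hj hlen'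
      have hb : b = b' := by
        cases b <;> cases b' <;> simp_all
      rw [hb, ih l₂ (by simpa using h) hsuf]

lemma eq_of_two_maps {α Q : Type*} :
    ∀ l₁ l₂ : List (Q × α × Q), l₁.map (fun t => t.2.1) = l₂.map (fun t => t.2.1) →
      l₁.map (fun t => (t.1, t.2.2)) = l₂.map (fun t => (t.1, t.2.2)) → l₁ = l₂ := by
  intro l₁
  induction l₁ with
  | nil => intro l₂ h _; cases l₂ <;> simp_all
  | cons a l ih =>
    intro l₂ h1 h2
    cases l₂ with
    | nil => simp at h1
    | cons a' l₂ =>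
      simp only [List.map_cons, List.cons.injEq] at h1 h2
      obtain ⟨ha1, h1⟩ := h1
      obtain ⟨ha2, h2⟩ := h2
      have : a = a' := by
        obtain ⟨x, y, z⟩ := a; obtain ⟨x', y', z'⟩ := a'
        simp_all
      rw [this, ih l₂ h1 h2]


lemma finite_accRun {α Q : Type*} [Fintype Q] (M : NFA' α Q) (w : List α) :
    Finite {r : Q × List (Q × α × Q) × Q // IsAccRun M w r} := by
  let f : {r : Q × List (Q × α × Q) × Q // IsAccRun M w r} →
      Q × List.Vector (Q × Q) w.length × Q := fun r =>
    (r.1.1, ⟨r.1.2.1.map (fun t => (t.1, t.2.2)), by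
      have h := r.2.2.2.1
      rw [List.length_map]
      conv_rhs => rw [← h]
      rw [List.length_map]⟩, r.1.2.2)
  have hf : Function.Injective f := by
    rintro ⟨⟨a, ts, b⟩, hr⟩ ⟨⟨a', ts', b'⟩, hr'⟩ h
    simp only [f, Prod.mk.injEq, Subtype.mk.injEq, List.Vector] at h ⊢
    obtain ⟨h1, h2, h3⟩ := h
    exact ⟨h1, eq_of_two_maps ts ts' (hr.2.2.1.trans hr'.2.2.1.symm) h2, h3⟩
  exact Finite.of_injective f hf

theorem not_polynomially_ambiguous_aux {α Q : Type*} [Fintype Q] (M : NFA' α Q)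
    (p qI qF : Q) (w₀ w₁ v : List α) (t₀ t₁ π₁ π₂ : List (Q × α × Q))
    (hqI : qI ∈ M.start) (h₀ : IsRunFrom M qI w₀ t₀ p)
    (h₁ : IsRunFrom M p v π₁ p) (h₂ : IsRunFrom M p v π₂ p) (hne : π₁ ≠ π₂)
    (hqF : qF ∈ M.accept) (h₃ : IsRunFrom M p w₁ t₁ qF) :
    ∀ P : Polynomial ℕ, ∃ w : List α,
      P.eval w.length < Nat.card {r : Q × List (Q × α × Q) × Q // IsAccRun M w r} := by
  intro P
  have hlen : π₁.length = π₂.length := by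
    have e1 := h₁.1; have e2 := h₂.1
    simpa using congrArg List.length (e1.trans e2.symm)
  set a := w₀.length + w₁.length with ha
  set Qp := P.comp (Polynomial.C a + Polynomial.C v.length * Polynomial.X) with hQp
  obtain ⟨n, hn⟩ := poly_eval_lt_two_pow Qp
  refine ⟨w₀ ++ ((List.replicate n v).flatten ++ w₁), ?_⟩
  set w := w₀ ++ ((List.replicate n v).flatten ++ w₁) with hw
  haveI := finite_accRun M w
  set B : (Fin n → Bool) → List (Q × α × Q) :=
    fun f => ((List.ofFn f).map fun b => cond b π₁ π₂).flatten with hB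
  have hrun : ∀ f, IsAccRun M w (qI, t₀ ++ (B f ++ t₁), qF) := by
    intro f
    refine ⟨hqI, hqF, ?_⟩
    have hmid := run_blocks h₁ h₂ (List.ofFn f)
    have e : ((List.ofFn f).map fun _ => v) = List.replicate n v := by
      simp [List.map_const']
      exact List.ofFn_const n v
    rw [e] at hmid
    exact h₀.append (hmid.append h₃)
  let G : (Fin n → Bool) → {r : Q × List (Q × α × Q) × Q // IsAccRun M w r} :=
    fun f => ⟨(qI, t₀ ++ (B f ++ t₁), qF), hrun f⟩
  have hG : Function.Injective G := by
    intro f g hfg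
    simp only [G, Subtype.mk.injEq, Prod.mk.injEq] at hfg
    have h5 : B f = B g :=
      List.append_cancel_right (List.append_cancel_left hfg.2.1)
    exact List.ofFn_injective
      (blocks_inj hlen hne (List.ofFn f) (List.ofFn g) (by simp) h5)
  have hcard : 2 ^ n ≤ Nat.card {r : Q × List (Q × α × Q) × Q // IsAccRun M w r} := by
    have hle := Nat.card_le_card_of_injective G hG
    have : Nat.card (Fin n → Bool) = 2 ^ n := by
      simp [Nat.card_eq_fintype_card]
    omega
  refine lt_of_lt_of_le ?_ hcard
  have hwl : w.length = a + v.length * n := by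
    simp only [hw, List.length_append, List.length_flatten, List.map_replicate,
      List.sum_replicate, smul_eq_mul, ha]
    ring
  have heq : Qp.eval n = P.eval (a + v.length * n) := by
    simp [hQp, Polynomial.eval_comp]
  rw [hwl, ← heq]
  exact hn

/-- If some state `p` is reachable from an initial state, carries two distinct
cycles labelled by the same word `v`, and reaches a final state, then the
ambiguity of the NFA is not polynomially bounded: for every polynomial `P`
there is a word `w` with more than `P(|w|)` accepting runs. -/
theorem not_polynomially_ambiguous {α Q : Type*} [Fintype Q] (M : NFA' α Q)
    (p qI qF : Q) (w₀ w₁ v : List α) (t₀ t₁ π₁ π₂ : List (Q × α × Q))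
    (hqI : qI ∈ M.start) (h₀ : IsRunFrom M qI w₀ t₀ p)
    (h₁ : IsRunFrom M p v π₁ p) (h₂ : IsRunFrom M p v π₂ p) (hne : π₁ ≠ π₂)
    (hqF : qF ∈ M.accept) (h₃ : IsRunFrom M p w₁ t₁ qF) :
    ∀ P : Polynomial ℕ, ∃ w : List α,
      P.eval w.length < Nat.card {r : Q × List (Q × α × Q) × Q // IsAccRun M w r} := by
  exact not_polynomially_ambiguous_aux M p qI qF w₀ w₁ v t₀ t₁ π₁ π₂ hqI h₀ h₁ h₂ hne hqF h₃
end
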